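/- arXiv:1312.2195 — 6 statements merged into one kernel-verified Lean document; each statement's English description precedes it below -/
import Mathlib

section
/- For any prime p, any integer n with n not congruent to 0 modulo p-1, and any integer r ≥ 0, the sum of k^n over all integers k with 1 ≤ k ≤ p^r - 1 and p not dividing k is congruent to 0 modulo p^r. -/
/-!
The summands are the values `u ^ n` of the units `u` of `ZMod (p ^ r)`, so the sum `S` is the sum
of the character `u ↦ u ^ n` over the unit group. Multiplying by a unit `g` permutes the summands,
so `(g ^ n - 1) * S = 0`. Take `g` lifting a generator of `(ZMod p)ˣ`: as `p - 1 ∤ n`, `g ^ n - 1`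
is nonzero mod `p`, hence a unit of `ZMod (p ^ r)`, and `S = 0`.
-/

open Finset

theorem sum_monoidHom_eq_zero_of_isUnit_sub_one {G R : Type*} [Group G] [Fintype G] [CommRing R]
    (χ : G →* R) {g : G} (hg : IsUnit (χ g - 1)) : ∑ u, χ u = 0 := by
  have hinv : χ g * ∑ u, χ u = ∑ u, χ u := by
    rw [mul_sum]
    simpa only [Equiv.coe_mulLeft, map_mul] using Equiv.sum_comp (Equiv.mulLeft g) χ
  rw [← hg.mul_right_eq_zero, sub_mul, one_mul, hinv, sub_self]

theorem ZMod.exists_unit_zpow_ne_one {p : ℕ} (hp : p.Prime) {n : ℤ} (hn : ¬ ((p : ℤ) - 1) ∣ n) :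
    ∃ a : (ZMod p)ˣ, a ^ n ≠ 1 := by
  have := Fact.mk hp
  by_contra! h
  rw [← Group.exponent_dvd_iff_forall_zpow_eq_one, IsCyclic.exponent_eq_card,
    Nat.card_eq_fintype_card, ZMod.card_units, Nat.cast_sub hp.one_le, Nat.cast_one] at h
  exact hn h

theorem ZMod.isUnit_iff_castHom_ne_zero {p r : ℕ} (hp : p.Prime) (hr : r ≠ 0) (x : ZMod (p ^ r)) :
    IsUnit x ↔ ZMod.castHom (dvd_pow_self p hr) (ZMod p) x ≠ 0 := by
  have : NeZero (p ^ r) := ⟨pow_ne_zero r hp.ne_zero⟩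
  rw [← ZMod.natCast_zmod_val x, ZMod.isUnit_natCast_iff_not_dvd_pow hp (Nat.pos_of_ne_zero hr),
    map_natCast, ne_eq, ZMod.natCast_eq_zero_iff]

theorem ZMod.coe_unit_zpow {N : ℕ} (u : (ZMod N)ˣ) (n : ℤ) :
    ((u ^ n : (ZMod N)ˣ) : ZMod N) =
      if 0 ≤ n then (u : ZMod N) ^ n.toNat else ((u : ZMod N)⁻¹) ^ (-n).toNat := by
  split_ifs with hn
  · lift n to ℕ using hn
    simp
  · obtain ⟨m, rfl⟩ : ∃ m : ℕ, n = -m := ⟨(-n).toNat, by omega⟩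
    simp [← ZMod.inv_coe_unit]

theorem ZMod.sum_units_eq_sum_coprime {M : Type*} [AddCommMonoid M] {N : ℕ} [Fact (1 < N)]
    (f : ZMod N → M) :
    ∑ k ∈ (Icc 1 (N - 1)).filter (fun k => k.Coprime N), f k = ∑ u : (ZMod N)ˣ, f u := by
  have hN : 1 < N := Fact.out
  refine sum_bij' (fun k hk => ZMod.unitOfCoprime k (mem_filter.1 hk).2)
    (fun u _ => (u : ZMod N).val) (fun _ _ => mem_univ _) (fun u _ => ?_) (fun k hk => ?_)
    (fun u _ => Units.ext (ZMod.natCast_zmod_val _)) (fun k hk => ?_)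
  · have hne : (u : ZMod N).val ≠ 0 := (ZMod.val_ne_zero _).2 u.ne_zero
    have hlt := ZMod.val_lt (u : ZMod N)
    simp only [mem_filter, mem_Icc]
    exact ⟨⟨by omega, by omega⟩, ZMod.val_coe_unit_coprime u⟩
  · simp only [mem_filter, mem_Icc] at hk
    simp only [ZMod.coe_unitOfCoprime]
    exact ZMod.val_natCast_of_lt (by omega)
  · simp only [ZMod.coe_unitOfCoprime]

theorem powersum_mod (p : ℕ) (hp : p.Prime) (n : ℤ) (hn : ¬ ((p : ℤ) - 1) ∣ n) (r : ℕ) :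
    ∑ k ∈ (Finset.Icc 1 (p ^ r - 1)).filter (fun k => ¬ p ∣ k),
      (if 0 ≤ n then ((k : ZMod (p ^ r))) ^ n.toNat
        else ((k : ZMod (p ^ r))⁻¹) ^ (-n).toNat) = 0 := by
  rcases eq_or_ne r 0 with rfl | hr
  · exact (ZMod.subsingleton_iff.2 (pow_zero p)).elim _ _
  have : Fact (1 < p ^ r) := ⟨Nat.one_lt_pow hr hp.one_lt⟩
  have hfilter : (Icc 1 (p ^ r - 1)).filter (fun k => ¬ p ∣ k) =
      (Icc 1 (p ^ r - 1)).filter (fun k => k.Coprime (p ^ r)) := by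
    refine filter_congr fun k _ => ?_
    rw [Nat.coprime_pow_right_iff (Nat.pos_of_ne_zero hr), Nat.coprime_comm,
      hp.coprime_iff_not_dvd]
  obtain ⟨a, ha⟩ := ZMod.exists_unit_zpow_ne_one hp hn
  obtain ⟨g, rfl⟩ := ZMod.unitsMap_surjective (dvd_pow_self p hr) a
  have hg : IsUnit (((g ^ n : (ZMod (p ^ r))ˣ) : ZMod (p ^ r)) - 1) := by
    rwa [ZMod.isUnit_iff_castHom_ne_zero hp hr, map_sub, map_one, sub_ne_zero, ZMod.castHom_apply,
      ← ZMod.unitsMap_val, map_zpow, Ne, Units.val_eq_one]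
  rw [hfilter, ZMod.sum_units_eq_sum_coprime
    (fun x => if 0 ≤ n then x ^ n.toNat else x⁻¹ ^ (-n).toNat)]
  simp only [← ZMod.coe_unit_zpow]
  exact sum_monoidHom_eq_zero_of_isUnit_sub_one
    ((Units.coeHom (ZMod (p ^ r))).comp (zpowGroupHom n)) hg
end

section
/- For any prime p ≥ 5, any even integer n with n not congruent to 0 modulo p-1, and any integer r ≥ 0, the sum of 1/k^n over all integers k with 1 ≤ k ≤ (p^r - 1)/2 and p not dividing k is congruent to 0 modulo p^r (as a congruence of p-adic integers, or equivalently the numerator of the rational sum is divisible by p^r). -/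
/-!
Put `N = p ^ r` (`r ≥ 1`, the case `r = 0` being trivial) and `m = -n`. The summand is `k ^ m`
computed in the unit group of `ZMod N`, and since `m` is even, `k` and `-k` contribute equally:
the sum of `u ^ m` over all units `u` is twice the given sum, and `2` is invertible mod `N`.
Multiplication by a unit `c` permutes the units, so that full sum `S` satisfies `c ^ m * S = S`.
Taking for `c` a lift of a generator of `(ZMod p)ˣ`, the element `c ^ m - 1` reduces to a nonzero
residue mod `p` because `p - 1 ∤ m`, so it is a unit of `ZMod N` and `S = 0`.
-/

open Finset

theorem MonoidHom.sum_eq_zero_of_isUnit_sub_one {G R : Type*} [Group G] [Fintype G] [Ring R]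
    (χ : G →* R) {c : G} (hc : IsUnit (χ c - 1)) : ∑ g, χ g = 0 := by
  have hinv : χ c * ∑ g, χ g = ∑ g, χ g := by
    rw [mul_sum]
    exact Fintype.sum_bijective (c * ·) (Group.mulLeft_bijective c) _ _
      fun g => (map_mul χ c g).symm
  refine hc.mul_left_cancel ?_
  rw [sub_mul, one_mul, hinv, sub_self, mul_zero]

theorem Finset.sum_Icc_two_mul_eq_two_nsmul {M : Type*} [AddCommMonoid M] (f : ℕ → M) (m : ℕ)
    (hf : ∀ k ∈ Icc 1 m, f (2 * m + 1 - k) = f k) :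
    ∑ k ∈ Icc 1 (2 * m), f k = 2 • ∑ k ∈ Icc 1 m, f k := by
  have hupper : ∑ k ∈ Ioc m (2 * m), f k = ∑ k ∈ Icc 1 m, f k := by
    refine sum_nbij' (2 * m + 1 - ·) (2 * m + 1 - ·) ?_ ?_ ?_ ?_ ?_ <;> intro k hk <;>
      simp only [mem_Icc, mem_Ioc] at hk ⊢
    · omega
    · omega
    · omega
    · omega
    · have := hf (2 * m + 1 - k) (mem_Icc.2 (by omega))
      rwa [Nat.sub_sub_self (by omega)] at this
  have hIcc_one : ∀ x, Icc 1 x = Ioc 0 x := Icc_add_one_left_eq_Ioc 0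
  rw [hIcc_one, ← sum_Ioc_consecutive _ (Nat.zero_le m) (by omega : m ≤ 2 * m), hupper,
    ← hIcc_one, two_nsmul]

namespace ZMod

theorem sum_units_eq_sum_Icc_coprime {M : Type*} [AddCommMonoid M] {N : ℕ} [Fact (1 < N)]
    (F : ZMod N → M) :
    ∑ u : (ZMod N)ˣ, F u = ∑ k ∈ (Icc 1 (N - 1)).filter (·.Coprime N), F k := by
  symm
  refine sum_bij' (fun k hk => unitOfCoprime k (mem_filter.1 hk).2)
    (fun u _ => (u : ZMod N).val) (fun _ _ => mem_univ _) (fun u _ => ?_) (fun k hk => ?_)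
    (fun u _ => Units.ext ?_) (fun k _ => by rw [coe_unitOfCoprime])
  · have hcop := val_coe_unit_coprime u
    have hpos : (u : ZMod N).val ≠ 0 := by
      intro h
      rw [h, Nat.coprime_zero_left] at hcop
      exact (Fact.out : 1 < N).ne' hcop
    have hlt := val_lt (u : ZMod N)
    exact mem_filter.2 ⟨mem_Icc.2 ⟨by omega, by omega⟩, hcop⟩
  · have hk := (mem_filter.1 hk).1
    rw [mem_Icc] at hk
    rw [coe_unitOfCoprime, val_natCast_of_lt (by omega)]
  · rw [coe_unitOfCoprime, natCast_zmod_val]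

theorem sum_units_eq_two_nsmul_sum_Icc_coprime {M : Type*} [AddCommMonoid M] {N : ℕ}
    [Fact (1 < N)] (hN : Odd N) (F : ZMod N → M) (hF : ∀ u : (ZMod N)ˣ, F (-u) = F u) :
    ∑ u : (ZMod N)ˣ, F u = 2 • ∑ k ∈ (Icc 1 ((N - 1) / 2)).filter (·.Coprime N), F k := by
  rw [sum_units_eq_sum_Icc_coprime]
  obtain ⟨m, rfl⟩ := hN
  rw [Nat.add_sub_cancel, Nat.mul_div_cancel_left m two_pos, sum_filter, sum_filter]
  refine sum_Icc_two_mul_eq_two_nsmul _ m fun k hk => ?_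
  have hkN : k ≤ 2 * m + 1 := by rw [mem_Icc] at hk; omega
  simp only [Nat.coprime_self_sub_left hkN]
  split_ifs with hcop
  · obtain ⟨u, hu⟩ := (isUnit_iff_coprime k _).2 hcop
    rw [Nat.cast_sub hkN, natCast_self, zero_sub, ← hu, hF]
  · rfl

theorem isUnit_iff_castHom_ne_zero_s1 {p r : ℕ} (hp : p.Prime) (hr : r ≠ 0) (x : ZMod (p ^ r)) :
    IsUnit x ↔ castHom (dvd_pow_self p hr) (ZMod p) x ≠ 0 := by
  have : NeZero (p ^ r) := ⟨pow_ne_zero r hp.ne_zero⟩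
  rw [← natCast_zmod_val x, isUnit_natCast_iff_not_dvd_pow hp (Nat.pos_of_ne_zero hr),
    map_natCast, Ne, natCast_eq_zero_iff]

/-- Lift a generator of `(ZMod p)ˣ`: its `m`-th power is not `1` since `p - 1 ∤ m`. -/
theorem exists_isUnit_coe_zpow_sub_one {p r : ℕ} (hp : p.Prime) (hr : r ≠ 0) {m : ℤ}
    (hm : ¬ ((p : ℤ) - 1) ∣ m) :
    ∃ c : (ZMod (p ^ r))ˣ, IsUnit (((c ^ m : (ZMod (p ^ r))ˣ) : ZMod (p ^ r)) - 1) := by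
  have : Fact p.Prime := ⟨hp⟩
  have : NeZero (p ^ r) := ⟨pow_ne_zero r hp.ne_zero⟩
  obtain ⟨g, hg⟩ := IsCyclic.exists_ofOrder_eq_natCard (α := (ZMod p)ˣ)
  have hgm : g ^ m ≠ 1 := by
    rwa [Ne, ← orderOf_dvd_iff_zpow_eq_one, hg, Nat.card_eq_fintype_card, card_units,
      Nat.cast_sub hp.one_le, Nat.cast_one]
  obtain ⟨c, rfl⟩ := unitsMap_surjective (dvd_pow_self p hr) g
  refine ⟨c, (isUnit_iff_castHom_ne_zero_s1 hp hr _).mpr fun h => hgm (Units.ext ?_)⟩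
  rw [map_sub, map_one, sub_eq_zero] at h
  rwa [← map_zpow, unitsMap_def, Units.coe_map, Units.val_one]

theorem ite_inv_pow_eq_coe_zpow_neg {N : ℕ} (u : (ZMod N)ˣ) (n : ℤ) :
    (if 0 ≤ n then ((u : ZMod N)⁻¹) ^ n.toNat else (u : ZMod N) ^ (-n).toNat) =
      ((u ^ (-n) : (ZMod N)ˣ) : ZMod N) := by
  split_ifs with h
  · rw [inv_coe_unit, ← Units.val_pow_eq_pow_val, zpow_neg, ← zpow_natCast,
      Int.toNat_of_nonneg h, inv_zpow]
  · rw [← Units.val_pow_eq_pow_val, ← zpow_natCast, Int.toNat_of_nonneg (by omega)]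

end ZMod

theorem powersum_inv_mod_general (p : ℕ) (hp : p.Prime) (n : ℤ) (hne : Even n)
    (hn : ¬ ((p : ℤ) - 1) ∣ n) (r : ℕ) :
    ∑ k ∈ (Finset.Icc 1 ((p ^ r - 1) / 2)).filter (fun k => ¬ p ∣ k),
      (if 0 ≤ n then ((k : ZMod (p ^ r))⁻¹) ^ n.toNat
        else ((k : ZMod (p ^ r))) ^ (-n).toNat) = 0 := by
  rcases Nat.eq_zero_or_pos r with rfl | hr
  · exact Subsingleton.elim (α := ZMod 1) _ _
  have hp2 : p ≠ 2 := by rintro rfl; exact hn (by norm_num)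
  have : Fact (1 < p ^ r) := ⟨Nat.one_lt_pow hr.ne' hp.one_lt⟩
  set F : ZMod (p ^ r) → ZMod (p ^ r) := fun x => if 0 ≤ n then x⁻¹ ^ n.toNat else x ^ (-n).toNat
  have hF (u : (ZMod (p ^ r))ˣ) : F u = ((u ^ (-n) : (ZMod (p ^ r))ˣ) : ZMod (p ^ r)) :=
    ZMod.ite_inv_pow_eq_coe_zpow_neg u n
  obtain ⟨c, hc⟩ := ZMod.exists_isUnit_coe_zpow_sub_one hp hr.ne' (m := -n) (by rwa [Int.dvd_neg])
  have hfull : ∑ u : (ZMod (p ^ r))ˣ, F u = 0 := by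
    simp only [hF]
    exact ((Units.coeHom _).comp (zpowGroupHom (-n))).sum_eq_zero_of_isUnit_sub_one (c := c) hc
  have hodd : Odd (p ^ r) := (hp.odd_of_ne_two hp2).pow
  rw [ZMod.sum_units_eq_two_nsmul_sum_Icc_coprime hodd F
    fun u => by rw [← Units.val_neg, hF, hF, hne.neg.neg_zpow]] at hfull
  have hcop (k : ℕ) : k.Coprime (p ^ r) ↔ ¬ p ∣ k := by
    rw [Nat.coprime_pow_right_iff hr, Nat.coprime_comm, hp.coprime_iff_not_dvd]
  have h2 : IsUnit (2 : ZMod (p ^ r)) := by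
    exact_mod_cast (ZMod.isUnit_iff_coprime 2 _).2 (Nat.coprime_two_left.2 hodd)
  rwa [filter_congr fun k _ => hcop k, nsmul_eq_mul, Nat.cast_two, h2.mul_right_eq_zero] at hfull

theorem powersum_inv_mod (p : ℕ) (hp : p.Prime) (hp5 : 5 ≤ p) (n : ℤ) (hne : Even n)
    (hn : ¬ ((p : ℤ) - 1) ∣ n) (r : ℕ) :
    ∑ k ∈ (Finset.Icc 1 ((p ^ r - 1) / 2)).filter (fun k => ¬ p ∣ k),
      (if 0 ≤ n then ((k : ZMod (p ^ r))⁻¹) ^ n.toNat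
        else ((k : ZMod (p ^ r))) ^ (-n).toNat) = 0 :=
  powersum_inv_mod_general p hp n hne hn r
end

section
/- For any prime p, integers m and k ≥ 0, and integer r ≥ 1, we have C(m*p^r - 1, k) * (-1)^k ≡ C(m*p^{r-1} - 1, ⌊k/p⌋) * (-1)^{⌊k/p⌋} (mod p^r). -/
open Finset

private lemma desc_eval (a : ℤ) (k : ℕ) :
    (descPochhammer ℤ k).smeval a = ∏ j ∈ Finset.range k, (a - j) := by
  induction k with
  | zero => simp [descPochhammer_zero, Polynomial.smeval_one]
  | succ n ih =>
    rw [descPochhammer_succ_right, Polynomial.smeval_mul, ih, Finset.prod_range_succ]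
    congr 1
    simp [Polynomial.smeval_sub, Polynomial.smeval_X, Polynomial.smeval_natCast]

private lemma choose_mul_factorial (a : ℤ) (k : ℕ) :
    (k.factorial : ℤ) * Ring.choose a k = ∏ j ∈ Finset.range k, (a - j) := by
  rw [← desc_eval, Ring.descPochhammer_eq_factorial_smul_choose, nsmul_eq_mul]

private lemma filter_dvd_Icc (p k : ℕ) (hp : 0 < p) :
    (Finset.Icc 1 k).filter (fun j => p ∣ j) =
      (Finset.Icc 1 (k / p)).image (fun i => p * i) := by
  ext j
  simp only [Finset.mem_filter, Finset.mem_Icc, Finset.mem_image]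
  constructor
  · rintro ⟨⟨h1, h2⟩, i, rfl⟩
    refine ⟨i, ⟨?_, (Nat.le_div_iff_mul_le hp).2 (by rwa [Nat.mul_comm])⟩, rfl⟩
    rcases Nat.eq_zero_or_pos i with rfl | h
    · omega
    · exact h
  · rintro ⟨i, ⟨h1, h2⟩, rfl⟩
    have := (Nat.le_div_iff_mul_le hp).1 h2
    exact ⟨⟨Nat.one_le_iff_ne_zero.2 (by positivity), by rwa [Nat.mul_comm p i]⟩, ⟨i, rfl⟩⟩

private lemma Icc_prod {M : Type*} [CommMonoid M] (f : ℕ → M) (k : ℕ) :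
    ∏ j ∈ Finset.Icc 1 k, f j = ∏ j ∈ Finset.range k, f (j + 1) := by
  rw [← Finset.Ico_add_one_right_eq_Icc, Finset.prod_Ico_eq_prod_range]
  exact Finset.prod_congr rfl fun j _ => by rw [Nat.add_comm]

private lemma prod_Icc_split (p k : ℕ) (hp : 0 < p) (f : ℕ → ℤ) :
    ∏ j ∈ Finset.Icc 1 k, f j =
      (∏ i ∈ Finset.Icc 1 (k / p), f (p * i)) *
        ∏ j ∈ (Finset.Icc 1 k).filter (fun j => ¬ p ∣ j), f j := by
  rw [← Finset.prod_filter_mul_prod_filter_not (Finset.Icc 1 k) (fun j => p ∣ j)]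
  congr 1
  rw [filter_dvd_Icc p k hp, Finset.prod_image]
  intro x _ y _ h
  exact Nat.eq_of_mul_eq_mul_left hp h

theorem binom_ind (p : ℕ) (hp : p.Prime) (m : ℤ) (k : ℕ) (r : ℕ) (hr : 1 ≤ r) :
    Ring.choose (m * (p : ℤ) ^ r - 1) k * (-1) ^ k ≡
      Ring.choose (m * (p : ℤ) ^ (r - 1) - 1) (k / p) * (-1) ^ (k / p) [ZMOD (p : ℕ) ^ r] := by
  obtain ⟨s, rfl⟩ : ∃ s, r = s + 1 := ⟨r - 1, (Nat.succ_pred_eq_of_pos hr).symm⟩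
  simp only [Nat.add_sub_cancel]
  have hppos : 0 < p := hp.pos
  set q := k / p with hq
  set L := Ring.choose (m * (p : ℤ) ^ (s + 1) - 1) k * (-1) ^ k with hL
  set R := Ring.choose (m * (p : ℤ) ^ s - 1) q * (-1) ^ q with hR
  set N := p ^ (s + 1) with hN
  haveI : NeZero N := ⟨pow_ne_zero _ hp.pos.ne'⟩
  set S := (Finset.Icc 1 k).filter (fun j => ¬ p ∣ j) with hS
  set A : ℕ := ∏ j ∈ S, j with hA
  set B : ℤ := ∏ j ∈ S, ((j : ℤ) - m * (p : ℤ) ^ (s + 1)) with hB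
  -- step 1: k! * L = full product
  have h1 : (k.factorial : ℤ) * L = ∏ j ∈ Finset.Icc 1 k, ((j : ℤ) - m * (p : ℤ) ^ (s + 1)) := by
    calc (k.factorial : ℤ) * L
        = ((k.factorial : ℤ) * Ring.choose (m * (p : ℤ) ^ (s + 1) - 1) k) * (-1) ^ k := by
          rw [hL]; ring
      _ = (∏ j ∈ Finset.range k, (m * (p : ℤ) ^ (s + 1) - 1 - j)) *
            ∏ _j ∈ Finset.range k, (-1 : ℤ) := by
          rw [choose_mul_factorial, Finset.prod_const, Finset.card_range]
      _ = ∏ j ∈ Finset.range k, (((j : ℤ) + 1) - m * (p : ℤ) ^ (s + 1)) := by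
          rw [← Finset.prod_mul_distrib]
          exact Finset.prod_congr rfl fun j _ => by ring
      _ = _ := by
          rw [Icc_prod]
          exact Finset.prod_congr rfl fun j _ => by push_cast; ring
  have h2 : (q.factorial : ℤ) * R = ∏ i ∈ Finset.Icc 1 q, ((i : ℤ) - m * (p : ℤ) ^ s) := by
    calc (q.factorial : ℤ) * R
        = ((q.factorial : ℤ) * Ring.choose (m * (p : ℤ) ^ s - 1) q) * (-1) ^ q := by
          rw [hR]; ring
      _ = (∏ j ∈ Finset.range q, (m * (p : ℤ) ^ s - 1 - j)) *
            ∏ _j ∈ Finset.range q, (-1 : ℤ) := by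
          rw [choose_mul_factorial, Finset.prod_const, Finset.card_range]
      _ = ∏ j ∈ Finset.range q, (((j : ℤ) + 1) - m * (p : ℤ) ^ s) := by
          rw [← Finset.prod_mul_distrib]
          exact Finset.prod_congr rfl fun j _ => by ring
      _ = _ := by
          rw [Icc_prod]
          exact Finset.prod_congr rfl fun j _ => by push_cast; ring
  -- step 2: split the full product
  have h3 : (k.factorial : ℤ) * L = (p : ℤ) ^ q * ((q.factorial : ℤ) * R) * B := by
    rw [h1, prod_Icc_split p k hppos, ← hS, ← hB, ← hq, h2]
    congr 1
    calc ∏ i ∈ Finset.Icc 1 q, (((p * i : ℕ) : ℤ) - m * (p : ℤ) ^ (s + 1))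
        = ∏ i ∈ Finset.Icc 1 q, ((p : ℤ) * ((i : ℤ) - m * (p : ℤ) ^ s)) := by
          exact Finset.prod_congr rfl fun i _ => by push_cast; ring
      _ = (p : ℤ) ^ q * ∏ i ∈ Finset.Icc 1 q, ((i : ℤ) - m * (p : ℤ) ^ s) := by
          rw [Finset.prod_mul_distrib, Finset.prod_const, Nat.card_Icc]
          simp
  -- step 3: factorial split
  have h4 : (k.factorial : ℤ) = (p : ℤ) ^ q * (q.factorial : ℤ) * A := by
    have := prod_Icc_split p k hppos (fun j => (j : ℤ))
    rw [← hq, ← hS] at this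
    have hfk : ((k.factorial : ℕ) : ℤ) = ∏ j ∈ Finset.Icc 1 k, ((j : ℤ)) := by
      rw [Icc_prod (fun j => (j : ℤ)), ← Finset.prod_range_add_one_eq_factorial]
      push_cast; rfl
    have hfq : ((q.factorial : ℕ) : ℤ) = ∏ i ∈ Finset.Icc 1 q, ((i : ℤ)) := by
      rw [Icc_prod (fun j => (j : ℤ)), ← Finset.prod_range_add_one_eq_factorial]
      push_cast; rfl
    rw [hfk, this, hfq, hA]
    push_cast
    congr 1
    calc ∏ i ∈ Finset.Icc 1 q, ((p * i : ℕ) : ℤ)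
        = ∏ i ∈ Finset.Icc 1 q, ((p : ℤ) * (i : ℤ)) := by push_cast; rfl
      _ = (p : ℤ) ^ q * ∏ i ∈ Finset.Icc 1 q, ((i : ℤ)) := by
          rw [Finset.prod_mul_distrib, Finset.prod_const, Nat.card_Icc]
          simp
  -- step 4: cancel
  have hcancel : (A : ℤ) * L = R * B := by
    have hne : ((p : ℤ) ^ q * (q.factorial : ℤ)) ≠ 0 := by positivity
    apply mul_left_cancel₀ hne
    calc (p : ℤ) ^ q * (q.factorial : ℤ) * ((A : ℤ) * L)
        = ((p : ℤ) ^ q * (q.factorial : ℤ) * A) * L := by ring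
      _ = (k.factorial : ℤ) * L := by rw [← h4]
      _ = (p : ℤ) ^ q * ((q.factorial : ℤ) * R) * B := h3
      _ = (p : ℤ) ^ q * (q.factorial : ℤ) * (R * B) := by ring
  -- step 5: pass to ZMod N
  have hAu : IsUnit ((A : ℕ) : ZMod N) := by
    rw [ZMod.isUnit_iff_coprime]
    apply Nat.Coprime.pow_right
    apply Nat.Coprime.prod_left
    intro j hj
    have hj' : ¬ p ∣ j := (Finset.mem_filter.1 hj).2
    exact (hp.coprime_iff_not_dvd.2 hj').symm
  have hBA : ((B : ℤ) : ZMod N) = ((A : ℕ) : ZMod N) := by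
    have hp0 : ((p : ZMod N)) ^ (s + 1) = 0 := by
      have : ((N : ℕ) : ZMod N) = 0 := ZMod.natCast_self N
      rw [hN] at this
      push_cast at this
      exact this
    rw [hB, hA]
    push_cast
    rw [hp0]
    simp
  have hmod : ((p : ℤ)) ^ (s + 1) = ((N : ℕ) : ℤ) := by rw [hN]; push_cast; ring
  rw [hmod, ← ZMod.intCast_eq_intCast_iff]
  have hcast : ((A : ℕ) : ZMod N) * (L : ZMod N) = (R : ZMod N) * ((A : ℕ) : ZMod N) := by
    have := congrArg (fun x : ℤ => (x : ZMod N)) hcancel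
    push_cast at this
    rw [this]
    have hB' := hBA
    push_cast at hB' ⊢
    rw [hB']
  apply hAu.mul_left_cancel
  rw [hcast]; ring
end

section
/- For any prime p and integers n ≥ 0, k ≥ 0, r ≥ 1, we have C(n*p^r + k, k) ≡ C(n*p^{r-1} + ⌊k/p⌋, ⌊k/p⌋) (mod p^r). -/
/-!
In `k! * C(a p + k, k) = ∏_{i=1}^{k} (a p + i)` the factors with `i = p j` are `p (a + j)`, and
together give `p ^ ⌊k/p⌋ ⌊k/p⌋! C(a + ⌊k/p⌋, ⌊k/p⌋)`; the same factors of `k!` give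
`p ^ ⌊k/p⌋ ⌊k/p⌋!`. Cancelling yields
`C(a p + k, k) * ∏_{i ≤ k, p ∤ i} i = C(a + ⌊k/p⌋, ⌊k/p⌋) * ∏_{i ≤ k, p ∤ i} (a p + i)`.
When `p ^ r ∣ a p` the two products agree modulo `p ^ r` and are prime to `p`, so they cancel.
Here `a = n p ^ (r - 1)`.
-/

open Finset

namespace Nat

theorem prod_Icc_add_eq_factorial_mul_choose (m k : ℕ) :
    ∏ i ∈ Icc 1 k, (m + i) = k ! * (m + k).choose k := by
  induction k with
  | zero => simp
  | succ k ih =>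
    rw [prod_Icc_succ_top (by omega), ih, ← add_assoc, mul_assoc, mul_comm _ (m + k + 1),
      add_one_mul_choose_eq, factorial_succ]
    ring

theorem prod_Icc_eq_factorial (k : ℕ) : ∏ i ∈ Icc 1 k, i = k ! := by
  simpa using prod_Icc_add_eq_factorial_mul_choose 0 k

theorem prod_Icc_filter_dvd_eq_prod_mul {M : Type*} [CommMonoid M] {p : ℕ} (hp : 0 < p)
    (k : ℕ) (f : ℕ → M) : ∏ i ∈ Icc 1 k with p ∣ i, f i = ∏ j ∈ Icc 1 (k / p), f (p * j) := by
  have hmap : {i ∈ Icc 1 k | p ∣ i}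
      = (Icc 1 (k / p)).map ⟨(p * ·), mul_right_injective₀ hp.ne'⟩ := by
    ext i
    simp only [mem_filter, mem_Icc, mem_map, Function.Embedding.coeFn_mk]
    constructor
    · rintro ⟨⟨hi1, hik⟩, j, rfl⟩
      exact ⟨j, ⟨by_contra fun h => by simp_all, (le_div_iff_mul_le hp).2 (by linarith)⟩, rfl⟩
    · rintro ⟨j, ⟨hj1, hjk⟩, rfl⟩
      exact ⟨⟨by nlinarith, by nlinarith [(le_div_iff_mul_le hp).1 hjk]⟩, dvd_mul_right p j⟩
  rw [hmap, prod_map]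
  rfl

theorem choose_mul_add_mul_prod_filter_not_dvd {p : ℕ} (hp : 0 < p) (a k : ℕ) :
    (a * p + k).choose k * ∏ i ∈ Icc 1 k with ¬p ∣ i, i
      = (a + k / p).choose (k / p) * ∏ i ∈ Icc 1 k with ¬p ∣ i, (a * p + i) := by
  have hmult : ∏ i ∈ Icc 1 k with p ∣ i, (a * p + i)
      = p ^ (k / p) * (k / p) ! * (a + k / p).choose (k / p) := by
    have hfactor : ∀ j, a * p + p * j = p * (a + j) := fun j => by ring
    simp only [prod_Icc_filter_dvd_eq_prod_mul hp, hfactor, prod_mul_distrib, prod_const,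
      card_Icc, add_tsub_cancel_right, mul_assoc, prod_Icc_add_eq_factorial_mul_choose]
  have hfact : k ! = p ^ (k / p) * (k / p) ! * ∏ i ∈ Icc 1 k with ¬p ∣ i, i := by
    rw [← prod_Icc_eq_factorial, ← prod_filter_mul_prod_filter_not _ (p ∣ ·),
      prod_Icc_filter_dvd_eq_prod_mul hp, prod_mul_distrib, prod_const, card_Icc,
      add_tsub_cancel_right, prod_Icc_eq_factorial]
  have hpos : 0 < p ^ (k / p) * (k / p) ! := by positivity
  have hsplit := prod_Icc_add_eq_factorial_mul_choose (a * p) k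
  rw [← prod_filter_mul_prod_filter_not _ (p ∣ ·), hmult, hfact] at hsplit
  apply Nat.eq_of_mul_eq_mul_left hpos
  linarith

theorem choose_mul_add_modEq {p r : ℕ} (hp : p.Prime) {a : ℕ} (ha : p ^ r ∣ a * p) (k : ℕ) :
    (a * p + k).choose k ≡ (a + k / p).choose (k / p) [MOD p ^ r] := by
  have hprod : ∏ i ∈ Icc 1 k with ¬p ∣ i, (a * p + i) ≡ ∏ i ∈ Icc 1 k with ¬p ∣ i, i
      [MOD p ^ r] :=
    ModEq.prod fun i _ => by simpa using (modEq_zero_iff_dvd.2 ha).add_right i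
  have hcop : Coprime (p ^ r) (∏ i ∈ Icc 1 k with ¬p ∣ i, i) :=
    Coprime.pow_left r <| Coprime.prod_right fun i hi =>
      (hp.coprime_iff_not_dvd).2 (mem_filter.1 hi).2
  refine ModEq.cancel_right_of_coprime hcop ?_
  rw [choose_mul_add_mul_prod_filter_not_dvd hp.pos]
  exact hprod.mul_left _

end Nat

theorem choose_shift_ind (p : ℕ) (hp : p.Prime) (n k r : ℕ) (hr : 1 ≤ r) :
    (n * p ^ r + k).choose k ≡ (n * p ^ (r - 1) + k / p).choose (k / p) [MOD p ^ r] := by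
  have hpow : n * p ^ r = n * p ^ (r - 1) * p := by
    rw [mul_assoc, ← pow_succ, Nat.sub_add_cancel hr]
  rw [hpow]
  exact Nat.choose_mul_add_modEq hp (hpow ▸ dvd_mul_left _ _) k
end

section
/- For any prime p and integers n ≥ 0, j ≥ 0, r ≥ 1, we have C(j, n*p^r) ≡ C(⌊j/p⌋, n*p^{r-1}) (mod p^r). -/
open Polynomial Finset

private lemma base_poly (p : ℕ) (hp : p.Prime) :
    (p : ℤ[X]) ∣ (X + 1) ^ p - expand ℤ p (X + 1) := by
  have hE : expand ℤ p (X + 1 : ℤ[X]) = X ^ p + 1 := by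
    simp [map_add, expand_X]
  rw [hE, ← Polynomial.C_eq_natCast, C_dvd_iff_dvd_coeff]
  intro i
  simp only [coeff_sub, coeff_X_add_one_pow, coeff_add, coeff_X_pow, coeff_one]
  by_cases h0 : i = 0
  · subst h0; simp [if_neg hp.ne_zero.symm, hp.pos.ne']
  by_cases hip : i = p
  · subst hip; simp [h0, Nat.choose_self]
  by_cases hlt : i < p
  · have := hp.dvd_choose_self h0 hlt
    simp only [if_neg hip, if_neg h0, add_zero, sub_zero]
    exact_mod_cast Int.natCast_dvd_natCast.mpr this
  · rw [Nat.choose_eq_zero_of_lt (by omega)]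
    simp [hip, h0]

private lemma lem2 (p : ℕ) (hp : p.Prime) (m s i : ℕ) :
    ((p : ℤ)) ^ (s + 1) ∣ (((m * p ^ (s + 1)).choose i : ℤ)
      - if p ∣ i then ((m * p ^ s).choose (i / p) : ℤ) else 0) := by
  have hmain := dvd_sub_pow_of_dvd_sub (base_poly p hp) s
  have e1 : ((X + 1 : ℤ[X]) ^ p) ^ p ^ s = (X + 1) ^ p ^ (s + 1) := by
    rw [← pow_mul, pow_succ']
  have e2 : (expand ℤ p (X + 1 : ℤ[X])) ^ p ^ s = expand ℤ p ((X + 1) ^ p ^ s) := by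
    rw [map_pow]
  rw [e1, e2] at hmain
  have h3 : (p : ℤ[X]) ^ (s + 1) ∣
      (X + 1) ^ (m * p ^ (s + 1)) - expand ℤ p ((X + 1) ^ (m * p ^ s)) := by
    have := hmain.trans (sub_dvd_pow_sub_pow _ _ m)
    rwa [← pow_mul, ← map_pow, ← pow_mul, mul_comm (p ^ (s+1)) m, mul_comm (p ^ s) m] at this
  have h4 : (p : ℤ[X]) ^ (s + 1) = C ((p : ℤ) ^ (s + 1)) := by
    rw [map_pow, Polynomial.C_eq_natCast]
  rw [h4, C_dvd_iff_dvd_coeff] at h3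
  have := h3 i
  rw [coeff_sub, coeff_X_add_one_pow, coeff_expand hp.pos] at this
  simpa only [coeff_X_add_one_pow] using this

theorem choose_lower_ind (p : ℕ) (hp : p.Prime) (n j r : ℕ) (hr : 1 ≤ r) :
    j.choose (n * p ^ r) ≡ (j / p).choose (n * p ^ (r - 1)) [MOD p ^ r] := by
  haveI : Fact p.Prime := ⟨hp⟩
  have hp1 : 1 < p := hp.one_lt
  induction r using Nat.strong_induction_on generalizing n j with
  | _ r IH =>
  obtain ⟨s, rfl⟩ : ∃ s, r = s + 1 := ⟨r - 1, by omega⟩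
  simp only [Nat.add_sub_cancel]
  rcases Nat.eq_zero_or_pos n with hn | hn
  · subst hn; simpa using Nat.ModEq.refl _
  set N := n * p ^ (s + 1) with hN
  set m := j / p ^ (s + 1) with hm
  set t := j % p ^ (s + 1) with htdef
  have ht : t < p ^ (s + 1) := Nat.mod_lt _ (by positivity)
  have hj : m * p ^ (s + 1) + t = j := by
    rw [hm, htdef, mul_comm]; exact Nat.div_add_mod j (p ^ (s + 1))
  have hjp : j / p = m * p ^ s + t / p := by
    conv_lhs => rw [← hj]
    rw [show m * p ^ (s + 1) + t = p * (m * p ^ s) + t by ring, Nat.mul_add_div hp.pos]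
  have hNp : N = p * (n * p ^ s) := by rw [hN]; ring
  -- h1 : Vandermonde
  have h1 : (j.choose N : ℤ)
      = ∑ i ∈ range (N + 1), ((m * p ^ (s + 1)).choose i : ℤ) * (t.choose (N - i) : ℤ) := by
    conv_lhs => rw [← hj]
    rw [Nat.add_choose_eq, Finset.Nat.sum_antidiagonal_eq_sum_range_succ_mk]
    push_cast
    rfl
  -- D i
  set D : ℕ → ℤ := fun i => if p ∣ i then ((m * p ^ s).choose (i / p) : ℤ) else 0 with hD
  have h2 : ((p : ℤ)) ^ (s + 1) ∣
      (∑ i ∈ range (N + 1), ((m * p ^ (s + 1)).choose i : ℤ) * (t.choose (N - i) : ℤ))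
      - ∑ i ∈ range (N + 1), D i * (t.choose (N - i) : ℤ) := by
    rw [← Finset.sum_sub_distrib]
    refine Finset.dvd_sum fun i _ => ?_
    rw [← sub_mul]
    exact Dvd.dvd.mul_right (lem2 p hp m s i) _
  have h3 : (∑ i ∈ range (N + 1), D i * (t.choose (N - i) : ℤ))
      = ∑ a ∈ range (n * p ^ s + 1), ((m * p ^ s).choose a : ℤ) * (t.choose (N - p * a) : ℤ) := by
    have hstep : ∀ i ∈ range (N + 1), D i * (t.choose (N - i) : ℤ)
        = if p ∣ i then ((m * p ^ s).choose (i / p) : ℤ) * (t.choose (N - i) : ℤ) else 0 := by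
      intro i _
      simp only [hD]
      split_ifs with h
      · rfl
      · rw [zero_mul]
    rw [Finset.sum_congr rfl hstep, ← Finset.sum_filter]
    refine Finset.sum_nbij' (fun i => i / p) (fun a => p * a) ?_ ?_ ?_ ?_ ?_
    · intro i hi
      simp only [Finset.mem_filter, Finset.mem_range] at hi
      simp only [Finset.mem_range]
      have : i / p ≤ N / p := Nat.div_le_div_right (by omega)
      rw [hNp, Nat.mul_div_cancel_left _ hp.pos] at this
      omega
    · intro a ha
      simp only [Finset.mem_range] at ha
      simp only [Finset.mem_filter, Finset.mem_range]
      refine ⟨?_, Dvd.intro a rfl⟩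
      have : p * a ≤ p * (n * p ^ s) := Nat.mul_le_mul_left p (by omega)
      omega
    · intro i hi
      simp only [Finset.mem_filter] at hi
      exact Nat.mul_div_cancel' hi.2
    · intro a _
      exact Nat.mul_div_cancel_left _ hp.pos
    · intro i hi
      simp only [Finset.mem_filter] at hi
      rw [Nat.mul_div_cancel' hi.2]
  have h4 : ((p : ℤ)) ^ (s + 1) ∣
      (∑ a ∈ range (n * p ^ s + 1), ((m * p ^ s).choose a : ℤ) * (t.choose (N - p * a) : ℤ))
      - ∑ a ∈ range (n * p ^ s + 1), ((m * p ^ s).choose a : ℤ) * (((t / p)).choose (n * p ^ s - a) : ℤ) := by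
    rw [← Finset.sum_sub_distrib]
    refine Finset.dvd_sum fun a ha => ?_
    simp only [Finset.mem_range] at ha
    have haN : a ≤ n * p ^ s := by omega
    set b := n * p ^ s - a with hb
    have hab : a + b = n * p ^ s := by omega
    have hNpa : N - p * a = p * b := by
      have hNe : N = p * a + p * b := by rw [hNp, ← hab]; ring
      omega
    rw [← mul_sub, hNpa]
    rcases Nat.eq_zero_or_pos b with hb0 | hb0
    · rw [hb0]; simp
    set c := padicValNat p b with hc
    have hpc : p ^ c ∣ b := pow_padicValNat_dvd
    have hpc1 : ¬ p ^ (c + 1) ∣ b := pow_succ_padicValNat_not_dvd hb0.ne'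
    by_cases hcs : s ≤ c
    · have hbs : p ^ s ≤ b := Nat.le_of_dvd hb0 ((pow_dvd_pow p hcs).trans hpc)
      have h1' : t.choose (p * b) = 0 := by
        apply Nat.choose_eq_zero_of_lt
        calc t < p ^ (s + 1) := ht
        _ = p * p ^ s := by ring
        _ ≤ p * b := Nat.mul_le_mul_left _ hbs
      have h2' : (t / p).choose b = 0 := by
        apply Nat.choose_eq_zero_of_lt
        have : t / p < p ^ s := by
          rw [Nat.div_lt_iff_lt_mul hp.pos]
          calc t < p ^ (s + 1) := ht
          _ = p ^ s * p := by ring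
        omega
      rw [h1', h2']; simp
    · push_neg at hcs
      have hc1s : c + 1 ≤ s := hcs
      have hIH := IH (c + 1) (by omega) (b / p ^ c) t (by omega)
      rw [Nat.modEq_iff_dvd] at hIH
      have hb1 : b / p ^ c * p ^ (c + 1) = p * b := by
        rw [pow_succ, ← mul_assoc, Nat.div_mul_cancel hpc]; ring
      have hb2 : b / p ^ c * p ^ (c + 1 - 1) = b := by
        simp only [Nat.add_sub_cancel]
        exact Nat.div_mul_cancel hpc
      rw [hb1, hb2] at hIH
      have hdvd1 : ((p : ℤ)) ^ (c + 1) ∣ (t.choose (p * b) : ℤ) - ((t / p).choose b : ℤ) := by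
        have h' := dvd_neg.mpr hIH
        rw [neg_sub] at h'
        exact_mod_cast h'
      have ha0 : a ≠ 0 := by
        intro h0
        apply hpc1
        have hbe : b = n * p ^ s := by omega
        rw [hbe]
        exact Dvd.dvd.mul_left (pow_dvd_pow p hc1s) n
      rcases Nat.eq_zero_or_pos m with hm0 | hm0
      · rw [hm0, zero_mul, Nat.choose_eq_zero_of_lt (Nat.pos_of_ne_zero ha0)]
        simp
      · have hpsa : p ^ c ∣ a := by
          have h1'' : p ^ c ∣ n * p ^ s := Dvd.dvd.mul_left (pow_dvd_pow p (by omega)) n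
          have hae : a = n * p ^ s - b := by omega
          rw [hae]; exact Nat.dvd_sub h1'' hpc
        have hpa1 : ¬ p ^ (c + 1) ∣ a := by
          intro hcon
          apply hpc1
          have hbe : b = n * p ^ s - a := by omega
          rw [hbe]
          exact Nat.dvd_sub (Dvd.dvd.mul_left (pow_dvd_pow p hc1s) n) hcon
        have hM : 1 ≤ m * p ^ s := Nat.mul_pos hm0 (pow_pos hp.pos s)
        have key : p ^ s ∣ (m * p ^ s).choose a * a := by
          have hid := Nat.add_one_mul_choose_eq (m * p ^ s - 1) (a - 1)
          simp only [Nat.succ_eq_add_one, Nat.sub_add_cancel hM,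
            Nat.sub_add_cancel (Nat.pos_of_ne_zero ha0)] at hid
          rw [← hid]
          exact Dvd.dvd.mul_right (dvd_mul_left _ _) _
        set a' := a / p ^ c with ha'
        have haa : a = p ^ c * a' := (Nat.mul_div_cancel' hpsa).symm
        have hpa' : ¬ p ∣ a' := by
          intro hcon
          apply hpa1
          rw [haa, pow_succ]
          exact mul_dvd_mul_left _ hcon
        have key2 : p ^ (s - c) ∣ a' * (m * p ^ s).choose a := by
          have hsplit : p ^ s = p ^ (s - c) * p ^ c := by
            rw [← pow_add]; congr 1; omega
          have hrw : (m * p ^ s).choose a * a = a' * (m * p ^ s).choose a * p ^ c := by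
            rw [haa]; ring
          have key' : p ^ (s - c) * p ^ c ∣ a' * (m * p ^ s).choose a * p ^ c := by
            rw [← hsplit, ← hrw]; exact key
          exact (Nat.mul_dvd_mul_iff_right (pow_pos hp.pos c)).mp key'
        have key3 : p ^ (s - c) ∣ (m * p ^ s).choose a :=
          (Nat.Coprime.pow_left _ (hp.coprime_iff_not_dvd.mpr hpa')).dvd_of_dvd_mul_left key2
        have final : ((p : ℤ)) ^ (s + 1) = (p : ℤ) ^ (s - c) * (p : ℤ) ^ (c + 1) := by
          rw [← pow_add]; congr 1; omega
        rw [final]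
        refine mul_dvd_mul ?_ hdvd1
        exact_mod_cast key3
  have h5 : ((j / p).choose (n * p ^ s) : ℤ)
      = ∑ a ∈ range (n * p ^ s + 1), ((m * p ^ s).choose a : ℤ) * (((t / p)).choose (n * p ^ s - a) : ℤ) := by
    rw [hjp, Nat.add_choose_eq, Finset.Nat.sum_antidiagonal_eq_sum_range_succ_mk]
    push_cast
    rfl
  rw [Nat.modEq_iff_dvd]
  push_cast
  have : ((j / p).choose (n * p ^ s) : ℤ) - (j.choose N : ℤ)
      = -((∑ i ∈ range (N + 1), ((m * p ^ (s + 1)).choose i : ℤ) * (t.choose (N - i) : ℤ))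
          - ∑ i ∈ range (N + 1), D i * (t.choose (N - i) : ℤ))
        - ((∑ a ∈ range (n * p ^ s + 1), ((m * p ^ s).choose a : ℤ) * (t.choose (N - p * a) : ℤ))
          - ∑ a ∈ range (n * p ^ s + 1), ((m * p ^ s).choose a : ℤ) * (((t / p)).choose (n * p ^ s - a) : ℤ)) := by
    rw [← h1, h3, ← h5]; ring
  rw [this]
  exact dvd_sub (Dvd.dvd.neg_right h2) h4
end

section
/- The super Catalan numbers S(m, n) = (2m)!(2n)!/(m! n! (m+n)!) are integers for all integers m, n ≥ 0, and S(m, n) is even whenever m + n ≥ 1. -/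
lemma superCat_int : ∀ m n : ℕ, ∃ k : ℤ,
    ((2 * m).factorial * (2 * n).factorial : ℤ) =
      (m.factorial * n.factorial * (m + n).factorial : ℕ) * k ∧
    (1 ≤ m + n → 2 ∣ k) := by
  intro m
  induction m with
  | zero =>
    intro n
    refine ⟨(2 * n).choose n, ?_, ?_⟩
    · have h := Nat.choose_mul_factorial_mul_factorial (show n ≤ 2 * n by omega)
      have h2 : 2 * n - n = n := by omega
      rw [h2] at h
      push_cast [← h]
      ring
    · intro hn
      obtain ⟨p, hp⟩ : ∃ p, n = p + 1 := ⟨n - 1, by omega⟩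
      subst hp
      have h1 : 2 * (p + 1) = (2 * p + 1) + 1 := by ring
      rw [h1, Nat.choose_succ_succ]
      rw [Nat.choose_symm_half]
      exact ⟨((2 * p + 1).choose p : ℤ), by push_cast; ring⟩
  | succ m ih =>
    intro n
    obtain ⟨k₁, hk₁, -⟩ := ih n
    obtain ⟨k₂, hk₂, he₂⟩ := ih (n + 1)
    obtain ⟨j, hj⟩ := he₂ (by omega)
    refine ⟨4 * k₁ - k₂, ?_, fun _ => ⟨2 * k₁ - j, by rw [hj]; ring⟩⟩
    have hne : ((n : ℤ) + 1) ≠ 0 := by positivity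
    apply mul_left_cancel₀ hne
    have e1 : 2 * (m + 1) = 2 * m + 1 + 1 := by ring
    have e2 : 2 * (n + 1) = 2 * n + 1 + 1 := by ring
    have e3 : m + 1 + n = (m + n) + 1 := by ring
    have e4 : m + (n + 1) = (m + n) + 1 := by ring
    rw [e2, e4] at hk₂
    rw [e1, e3]
    push_cast [Nat.factorial_succ] at hk₁ hk₂ ⊢
    linear_combination (4 * ((n : ℤ) + 1) * ((m : ℤ) + 1) * ((m : ℤ) + (n : ℤ) + 1)) * hk₁
      - ((m : ℤ) + 1) * hk₂

theorem superCatalan_integral_and_even (m n : ℕ) :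
    (m.factorial * n.factorial * (m + n).factorial) ∣ (2 * m).factorial * (2 * n).factorial ∧
    (1 ≤ m + n →
      2 * (m.factorial * n.factorial * (m + n).factorial) ∣
        (2 * m).factorial * (2 * n).factorial) := by
  obtain ⟨k, hk, he⟩ := superCat_int m n
  constructor
  · rw [← Int.natCast_dvd_natCast]
    exact ⟨k, by push_cast at hk ⊢; linarith [hk]⟩
  · intro h
    obtain ⟨j, hj⟩ := he h
    rw [← Int.natCast_dvd_natCast]
    refine ⟨j, ?_⟩
    push_cast
    push_cast at hk
    rw [hk, hj]
    ring
end
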